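/- arXiv:2403.08052 — 2 statements merged into one kernel-verified Lean document; each statement's English description precedes it below -/
import Mathlib

section
/- Let H be a real Hilbert space, T, A : H → H, B₁ : ℝ^{nw} → H, B₂ : ℝ^{nu} → H, C₁ : H → ℝ^{nz} bounded linear operators, D₁₂ : ℝ^{nu} → ℝ^{nz} a linear map, and ε, γ > 0. Suppose there exist a bounded self-adjoint operator P : H → H with ⟨x, P x⟩ ≥ ε‖x‖² for all x, a bounded operator Z : H → ℝ^{nu}, and a self-adjoint linear map W : ℝ^{nz} → ℝ^{nz} such that: (i) 2⟨P T* x, A* x⟩ + 2⟨Z (T* x), B₂* x⟩ + ‖B₁* x‖² ≤ 0 for all x ∈ H (i.e., A P T* + T P A* + B₂ Z T* + T Z* B₂* + B₁ B₁* ⪯ 0); (ii) ⟨x, P x⟩ + 2⟨v, C₁ (P x) + D₁₂ (Z x)⟩ + ⟨v, W v⟩ ≥ 0 for all x ∈ H and v ∈ ℝ^{nz}; and (iii) trace(W) ≤ γ². Then for every bounded linear operator K : H → ℝ^{nu} with K ∘ P = Z (i.e., K = Z P⁻¹), and every ū₀ ∈ ℝ^{nz}, every differentiable x̄ : [0,∞)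 → H with T* ẋ̄(t) = (A + B₂ ∘ K)* x̄(t) for all t ≥ 0 and T* x̄(0) = (C₁ + D₁₂ ∘ K)* ū₀ satisfies ∫₀^∞ ‖B₁* x̄(t)‖² dt ≤ γ² ‖ū₀‖². (Corollary 5, dual-certificate form: the LPI certifies the H₂ bound γ for the dual of the closed-loop system Σ(T, A + B₂K, B₁, C₁ + D₁₂K).) -/
open scoped RealInnerProductSpace

lemma trace_eq_sum_inner_ob {E : Type*} [NormedAddCommGroup E] [InnerProductSpace ℝ E]
    [FiniteDimensional ℝ E] {ι : Type*} [Fintype ι] [DecidableEq ι]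
    (b : OrthonormalBasis ι ℝ E) (W : E →L[ℝ] E) :
    LinearMap.trace ℝ E W.toLinearMap = ∑ i, ⟪b i, W (b i)⟫ := by
  rw [LinearMap.trace_eq_matrix_trace ℝ b.toBasis, Matrix.trace]
  simp [Matrix.diag, LinearMap.toMatrix_apply, OrthonormalBasis.coe_toBasis,
    OrthonormalBasis.coe_toBasis_repr_apply, OrthonormalBasis.repr_apply_apply]

lemma inner_le_trace_mul_sq {E : Type*} [NormedAddCommGroup E] [InnerProductSpace ℝ E]
    [FiniteDimensional ℝ E] (W : E →L[ℝ] E) (hW : ∀ v : E, 0 ≤ ⟪v, W v⟫) (v : E) :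
    ⟪v, W v⟫ ≤ LinearMap.trace ℝ E W.toLinearMap * ‖v‖ ^ 2 := by
  classical
  rcases eq_or_ne v 0 with rfl | hv
  · simp
  · set u : E := ‖v‖⁻¹ • v with hu
    have hnv : (0:ℝ) < ‖v‖ := norm_pos_iff.mpr hv
    have hun : ‖u‖ = 1 := by
      rw [hu, norm_smul]; simp [abs_of_pos (inv_pos.mpr hnv), inv_mul_cancel₀ hnv.ne']
    have ho : Orthonormal ℝ ((↑) : ({u} : Set E) → E) := by
      rw [orthonormal_iff_ite]
      rintro ⟨i, hi⟩ ⟨j, hj⟩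
      simp only [Set.mem_singleton_iff] at hi hj
      subst hi; subst hj
      simp [real_inner_self_eq_norm_sq, hun]
    obtain ⟨s, b, hus, hb⟩ := ho.exists_orthonormalBasis_extension
    have hu_mem : u ∈ s := hus rfl
    have htr : ⟪u, W u⟫ ≤ LinearMap.trace ℝ E W.toLinearMap := by
      rw [trace_eq_sum_inner_ob b W]
      have : ⟪u, W u⟫ = ⟪b ⟨u, hu_mem⟩, W (b ⟨u, hu_mem⟩)⟫ := by rw [hb]
      rw [this]
      exact Finset.single_le_sum (fun i _ => hW (b i)) (Finset.mem_univ _)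
    have hvu : v = ‖v‖ • u := by rw [hu, smul_smul, mul_inv_cancel₀ hnv.ne', one_smul]
    have key : ⟪v, W v⟫ = ‖v‖ ^ 2 * ⟪u, W u⟫ := by
      conv_lhs => rw [hvu]
      simp only [map_smul, real_inner_smul_left, inner_smul_right]
      ring
    calc ⟪v, W v⟫ = ‖v‖ ^ 2 * ⟪u, W u⟫ := key
      _ ≤ ‖v‖ ^ 2 * LinearMap.trace ℝ E W.toLinearMap :=
          mul_le_mul_of_nonneg_left htr (sq_nonneg _)
      _ = _ := mul_comm _ _

set_option maxHeartbeats 1000000 in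

/-- **Corollary 5, dual-certificate form (LPI for the `H₂`-optimal state-feedback controller).**
If `P ⪰ εI` self-adjoint, `Z`, and `W` self-adjoint satisfy the controller LPI
(i) `A P T* + T P A* + B₂ Z T* + T Z* B₂* + B₁ B₁* ⪯ 0`,
(ii) `[[P, (C₁P + D₁₂Z)*], [C₁P + D₁₂Z, W]] ⪰ 0`, and (iii) `trace(W) ≤ γ²`,
then for the feedback gain `K = Z P⁻¹` the dual of the closed-loop system
`Σ(T, A + B₂K, B₁, C₁ + D₁₂K)` has `H₂`-norm at most `γ`. -/
theorem pie_H2_optimal_controller_dual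
    {H : Type*} [NormedAddCommGroup H] [InnerProductSpace ℝ H] [CompleteSpace H]
    (nw nu nz : ℕ) (T A : H →L[ℝ] H)
    (B₁ : EuclideanSpace ℝ (Fin nw) →L[ℝ] H)
    (B₂ : EuclideanSpace ℝ (Fin nu) →L[ℝ] H)
    (C₁ : H →L[ℝ] EuclideanSpace ℝ (Fin nz))
    (D₁₂ : EuclideanSpace ℝ (Fin nu) →L[ℝ] EuclideanSpace ℝ (Fin nz))
    (ε γ : ℝ) (hε : 0 < ε) (hγ : 0 < γ)
    (P : H →L[ℝ] H) (hPsa : IsSelfAdjoint P)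
    (hPpos : ∀ x : H, ε * ‖x‖ ^ 2 ≤ ⟪x, P x⟫)
    (Z : H →L[ℝ] EuclideanSpace ℝ (Fin nu))
    (W : EuclideanSpace ℝ (Fin nz) →L[ℝ] EuclideanSpace ℝ (Fin nz)) (hWsa : IsSelfAdjoint W)
    (hLPI : ∀ x : H,
      2 * ⟪P (ContinuousLinearMap.adjoint T x), ContinuousLinearMap.adjoint A x⟫ +
        2 * ⟪Z (ContinuousLinearMap.adjoint T x), ContinuousLinearMap.adjoint B₂ x⟫ +
        ‖ContinuousLinearMap.adjoint B₁ x‖ ^ 2 ≤ 0)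
    (hblock : ∀ (x : H) (v : EuclideanSpace ℝ (Fin nz)),
      0 ≤ ⟪x, P x⟫ + 2 * ⟪v, C₁ (P x) + D₁₂ (Z x)⟫ + ⟪v, W v⟫)
    (htrace : LinearMap.trace ℝ (EuclideanSpace ℝ (Fin nz)) W.toLinearMap ≤ γ ^ 2) :
    ∀ K : H →L[ℝ] EuclideanSpace ℝ (Fin nu), K ∘L P = Z →
      ∀ (ub₀ : EuclideanSpace ℝ (Fin nz)) (xb xb' : ℝ → H),
        (∀ t : ℝ, 0 ≤ t → HasDerivAt xb (xb' t) t) →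
        (∀ t : ℝ, 0 ≤ t →
          ContinuousLinearMap.adjoint T (xb' t) =
            ContinuousLinearMap.adjoint (A + B₂ ∘L K) (xb t)) →
        ContinuousLinearMap.adjoint T (xb 0) =
          ContinuousLinearMap.adjoint (C₁ + D₁₂ ∘L K) ub₀ →
        (∫ t in Set.Ioi (0 : ℝ), ‖ContinuousLinearMap.adjoint B₁ (xb t)‖ ^ 2) ≤
          γ ^ 2 * ‖ub₀‖ ^ 2 := by
  intro K hK ub₀ xb xb' hderiv hode hinit
  classical
  set Ac : H →L[ℝ] H := A + B₂ ∘L K with hAc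
  set M : H →L[ℝ] EuclideanSpace ℝ (Fin nz) := C₁ + D₁₂ ∘L K with hM
  set f : ℝ → ℝ := fun t => ‖ContinuousLinearMap.adjoint B₁ (xb t)‖ ^ 2 with hf
  set y : ℝ → H := fun t => ContinuousLinearMap.adjoint T (xb t) with hy
  set g : ℝ → ℝ := fun t => 2 * ⟪P (y t), ContinuousLinearMap.adjoint Ac (xb t)⟫ with hg
  set V : ℝ → ℝ := fun t => ⟪y t, P (y t)⟫ with hV
  have hKP : ∀ x : H, K (P x) = Z x := fun x => ContinuousLinearMap.ext_iff.mp hK x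
  have hP' : ∀ a b : H, ⟪P a, b⟫ = ⟪a, P b⟫ := fun a b => by
    conv_lhs => rw [← hPsa.adjoint_eq]
    rw [ContinuousLinearMap.adjoint_inner_left]
  -- closed-loop LPI
  have hLPIc : ∀ x : H,
      2 * ⟪P (ContinuousLinearMap.adjoint T x), ContinuousLinearMap.adjoint Ac x⟫ +
        ‖ContinuousLinearMap.adjoint B₁ x‖ ^ 2 ≤ 0 := by
    intro x
    have hsplit : ⟪P (ContinuousLinearMap.adjoint T x), ContinuousLinearMap.adjoint Ac x⟫ =
        ⟪P (ContinuousLinearMap.adjoint T x), ContinuousLinearMap.adjoint A x⟫ +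
        ⟪Z (ContinuousLinearMap.adjoint T x), ContinuousLinearMap.adjoint B₂ x⟫ := by
      rw [hAc, map_add, ContinuousLinearMap.add_apply, inner_add_right,
        ContinuousLinearMap.adjoint_comp]
      congr 1
      rw [ContinuousLinearMap.comp_apply, ContinuousLinearMap.adjoint_inner_right,
        ← hKP]
    have := hLPI x
    rw [hsplit]; linarith
  -- derivative of V
  have hyd : ∀ t : ℝ, 0 ≤ t → HasDerivAt y (ContinuousLinearMap.adjoint T (xb' t)) t :=
    fun t ht => (ContinuousLinearMap.adjoint T).hasFDerivAt.comp_hasDerivAt t (hderiv t ht)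
  have hVd : ∀ t : ℝ, 0 ≤ t → HasDerivAt V (g t) t := by
    intro t ht
    have h1 : HasDerivAt V (⟪y t, P (ContinuousLinearMap.adjoint T (xb' t))⟫ +
        ⟪ContinuousLinearMap.adjoint T (xb' t), P (y t)⟫) t :=
      HasDerivAt.inner ℝ (hyd t ht) (P.hasFDerivAt.comp_hasDerivAt t (hyd t ht))
    have h2 : ⟪y t, P (ContinuousLinearMap.adjoint T (xb' t))⟫ +
        ⟪ContinuousLinearMap.adjoint T (xb' t), P (y t)⟫ = g t := by
      rw [hode t ht]
      have e1 : ⟪y t, P (ContinuousLinearMap.adjoint Ac (xb t))⟫ =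
          ⟪P (y t), ContinuousLinearMap.adjoint Ac (xb t)⟫ := (hP' _ _).symm
      have e2 : ⟪ContinuousLinearMap.adjoint Ac (xb t), P (y t)⟫ =
          ⟪P (y t), ContinuousLinearMap.adjoint Ac (xb t)⟫ := real_inner_comm _ _
      rw [e1, e2, hg]
      ring
    exact h2 ▸ h1
  -- bound on each finite-time integral
  have hWpos : ∀ v : EuclideanSpace ℝ (Fin nz), 0 ≤ ⟪v, W v⟫ := by
    intro v
    have := hblock 0 v
    simpa using this
  have hV0 : V 0 ≤ γ ^ 2 * ‖ub₀‖ ^ 2 := by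
    set m : H := ContinuousLinearMap.adjoint M ub₀ with hm
    have hy0 : y 0 = m := hinit
    have hMP : ∀ x : H, C₁ (P x) + D₁₂ (Z x) = M (P x) := by
      intro x
      rw [hM, ContinuousLinearMap.add_apply, ContinuousLinearMap.comp_apply, hKP]
    have hbl := hblock (-m) ub₀
    have e1 : C₁ (P (-m)) + D₁₂ (Z (-m)) = -(M (P m)) := by
      rw [hMP, map_neg, map_neg]
    have e2 : ⟪ub₀, M (P m)⟫ = ⟪m, P m⟫ := by
      rw [hm, ContinuousLinearMap.adjoint_inner_left]
    have e3 : ⟪(-m : H), P (-m)⟫ = ⟪m, P m⟫ := by simp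
    rw [e1, e3, inner_neg_right, e2] at hbl
    have hq : ⟪m, P m⟫ ≤ ⟪ub₀, W ub₀⟫ := by linarith
    have htr := inner_le_trace_mul_sq W hWpos ub₀
    have : LinearMap.trace ℝ (EuclideanSpace ℝ (Fin nz)) W.toLinearMap * ‖ub₀‖ ^ 2 ≤
        γ ^ 2 * ‖ub₀‖ ^ 2 := mul_le_mul_of_nonneg_right htrace (sq_nonneg _)
    calc V 0 = ⟪m, P m⟫ := by rw [hV]; simp only; rw [hy0]
      _ ≤ ⟪ub₀, W ub₀⟫ := hq
      _ ≤ _ := le_trans htr this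
  have key : ∀ s : ℝ, 0 ≤ s → (∫ t in (0:ℝ)..s, f t) ≤ γ ^ 2 * ‖ub₀‖ ^ 2 := by
    intro s hs
    have hxcs : ContinuousOn xb (Set.uIcc 0 s) := by
      rw [Set.uIcc_of_le hs]
      exact fun t ht => ((hderiv t ht.1).continuousAt).continuousWithinAt
    have hfc : ContinuousOn f (Set.uIcc 0 s) := by
      have hc : Continuous fun x : H => ‖ContinuousLinearMap.adjoint B₁ x‖ ^ 2 :=
        ((ContinuousLinearMap.adjoint B₁).continuous.norm).pow 2
      exact hc.comp_continuousOn hxcs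
    have hgc : ContinuousOn g (Set.uIcc 0 s) := by
      have hc : Continuous fun x : H =>
          2 * ⟪P (ContinuousLinearMap.adjoint T x), ContinuousLinearMap.adjoint Ac x⟫ :=
        continuous_const.mul (Continuous.inner
          (P.continuous.comp (ContinuousLinearMap.adjoint T).continuous)
          (ContinuousLinearMap.adjoint Ac).continuous)
      exact hc.comp_continuousOn hxcs
    have hfi : IntervalIntegrable f MeasureTheory.volume 0 s := hfc.intervalIntegrable
    have hgi : IntervalIntegrable g MeasureTheory.volume 0 s := hgc.intervalIntegrable
    have hVds : ∀ t ∈ Set.uIcc 0 s, HasDerivAt V (g t) t := by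
      rw [Set.uIcc_of_le hs]
      exact fun t ht => hVd t ht.1
    have hftc : (∫ t in (0:ℝ)..s, g t) = V s - V 0 :=
      intervalIntegral.integral_eq_sub_of_hasDerivAt hVds hgi
    have hmono : (∫ t in (0:ℝ)..s, f t) ≤ ∫ t in (0:ℝ)..s, -(g t) := by
      apply intervalIntegral.integral_mono_on hs hfi hgi.neg
      intro t ht
      have h := hLPIc (xb t)
      show f t ≤ -(g t)
      simp only [hf, hg, hy]
      linarith
    have hVs : 0 ≤ V s := by
      have h1 := hPpos (y s)
      have h2 : 0 ≤ ε * ‖y s‖ ^ 2 := by positivity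
      exact le_trans h2 h1
    have : (∫ t in (0:ℝ)..s, -(g t)) = V 0 - V s := by
      rw [intervalIntegral.integral_neg, hftc]; ring
    rw [this] at hmono
    linarith
  -- pass to the improper integral
  by_cases hint : MeasureTheory.IntegrableOn f (Set.Ioi (0:ℝ)) MeasureTheory.volume
  · have htend := MeasureTheory.intervalIntegral_tendsto_integral_Ioi 0 hint Filter.tendsto_id
    exact le_of_tendsto htend ((Filter.eventually_ge_atTop (0:ℝ)).mono fun s hs => key s hs)
  · rw [MeasureTheory.integral_undef hint]
    positivity
end

section
/- Let H be a real Hilbert space, T, A : H → H, B₁ : ℝ^{nw} → H, B₂ : ℝ^{nu} → H, C₁ : H → ℝ^{nz} bounded linear operators, D₁₂ : ℝ^{nu} → ℝ^{nz} a linear map, and ε, γ > 0. Suppose there exist a bounded self-adjoint operator P : H → H with ⟨x, P x⟩ ≥ ε‖x‖² for all x, a bounded operator Z : H → ℝ^{nu}, and a self-adjoint linear map W : ℝ^{nz} → ℝ^{nz} such that: (i) 2⟨P T* x, A* x⟩ + 2⟨Z (T* x), B₂* x⟩ + ‖B₁* x‖² ≤ 0 for all x ∈ H; (ii) ⟨x,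 P x⟩ + 2⟨v, C₁ (P x) + D₁₂ (Z x)⟩ + ⟨v, W v⟩ ≥ 0 for all x ∈ H and v ∈ ℝ^{nz}; and (iii) trace(W) ≤ γ². Let K : H → ℝ^{nu} be a bounded linear operator with K ∘ P = Z, and assume that for every ū₀ ∈ ℝ^{nz} there exists a differentiable x̄ : [0,∞) → H with T* ẋ̄(t) = (A + B₂ ∘ K)* x̄(t) for all t ≥ 0 and T* x̄(0) = (C₁ + D₁₂ ∘ K)* ū₀. Then for every u₀ ∈ ℝ^{nw}, every differentiable x : [0,∞) → H with T ẋ(t) = (A + B₂ ∘ K) x(t) for all t ≥ 0 and T x(0) = B₁ u₀ satisfies ∫₀^∞ ‖(C₁ + D₁₂ ∘ K) x(t)‖² dt ≤ γ² ‖u₀‖². (Corollary 5: the H₂-norm of the closed-loop system Σ(T, A + B₂K, B₁, C₁ + D₁₂K) under state feedback u = Kx is bounded by γ.) -/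
open scoped RealInnerProductSpace

/-!
Dualize: a solution `x̄ᵢ` of the dual PIE started at `T* x̄ᵢ(0) = C̃* eᵢ` satisfies
`⟪eᵢ, C̃ x(s)⟫ = ⟪B₁* x̄ᵢ(s), u₀⟫`, because `t ↦ ⟪x̄ᵢ(s - t), T x(t)⟫` is constant. Along `x̄ᵢ` the
Lyapunov function `⟪T* x̄, P T* x̄⟫` decreases at rate at least `‖B₁* x̄‖²` by the LPI (i), so the
dual output energy is at most `⟪C̃* eᵢ, P C̃* eᵢ⟫ ≤ ⟪eᵢ, W eᵢ⟫`, by (ii) at `x = -C̃* eᵢ`.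
Summing over `i` with Cauchy–Schwarz bounds the output energy by `trace W ‖u₀‖² ≤ γ² ‖u₀‖²`.
-/

open Set MeasureTheory ContinuousLinearMap

section PIE

variable {H : Type*} [NormedAddCommGroup H] [InnerProductSpace ℝ H]

def IsPIESolution (T A : H →L[ℝ] H) (x x' : ℝ → H) : Prop :=
  ∀ t, 0 ≤ t → HasDerivAt x (x' t) t ∧ T (x' t) = A (x t)

variable {T A : H →L[ℝ] H} {x x' : ℝ → H}

theorem IsPIESolution.continuousOn (hx : IsPIESolution T A x x') : ContinuousOn x (Ici 0) :=
  fun t ht => (hx t ht).1.continuousAt.continuousWithinAt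

theorem hasDerivAt_inner_apply_self {P : H →L[ℝ] H} (hP : (P : H →ₗ[ℝ] H).IsSymmetric)
    {y : ℝ → H} {y' : H} {t : ℝ} (hy : HasDerivAt y y' t) :
    HasDerivAt (fun s => ⟪y s, P (y s)⟫) (2 * ⟪P (y t), y'⟫) t := by
  refine (hy.inner ℝ (P.hasFDerivAt.comp_hasDerivAt t hy)).congr_deriv ?_
  have h := hP (y t) y'
  simp only [coe_coe] at h
  rw [Function.comp_apply, ← h, real_inner_comm (P (y t)) y']
  ring

theorem intervalIntegral_le_sub_of_hasDerivAt_add_nonpos {V V' q : ℝ → ℝ} {a b : ℝ}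
    (hab : a ≤ b) (hV : ∀ t ∈ Icc a b, HasDerivAt V (V' t) t) (hq : ContinuousOn q (Icc a b))
    (hVq : ∀ t ∈ Icc a b, V' t + q t ≤ 0) : ∫ t in a..b, q t ≤ V a - V b := by
  have := intervalIntegral.integral_le_sub_of_hasDeriv_right_of_le (g := fun t => -V t) hab
    (fun t ht => (hV t ht).neg.continuousAt.continuousWithinAt)
    (fun t ht => (hV t (Ioo_subset_Icc_self ht)).neg.hasDerivWithinAt) hq.integrableOn_Icc
    (fun t ht => by linarith [hVq t (Ioo_subset_Icc_self ht)])
  linarith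

theorem IsPIESolution.intervalIntegral_norm_sq_le {G : Type*} [NormedAddCommGroup G]
    [InnerProductSpace ℝ G] (hx : IsPIESolution T A x x') {P : H →L[ℝ] H}
    (hP : (P : H →ₗ[ℝ] H).IsSymmetric) (hPnn : ∀ z, 0 ≤ ⟪z, P z⟫) (C : H →L[ℝ] G)
    (hLyap : ∀ z, 2 * ⟪P (T z), A z⟫ + ‖C z‖ ^ 2 ≤ 0) {S : ℝ} (hS : 0 ≤ S) :
    ∫ t in 0..S, ‖C (x t)‖ ^ 2 ≤ ⟪T (x 0), P (T (x 0))⟫ := by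
  have hV : ∀ t ∈ Icc 0 S, HasDerivAt (fun s => ⟪T (x s), P (T (x s))⟫)
      (2 * ⟪P (T (x t)), A (x t)⟫) t := fun t ht => by
    rw [← (hx t ht.1).2]
    exact hasDerivAt_inner_apply_self hP (T.hasFDerivAt.comp_hasDerivAt t (hx t ht.1).1)
  have hq : ContinuousOn (fun t => ‖C (x t)‖ ^ 2) (Icc 0 S) :=
    ((C.continuous.norm.pow 2).comp_continuousOn hx.continuousOn).mono Icc_subset_Ici_self
  have := intervalIntegral_le_sub_of_hasDerivAt_add_nonpos hS hV hq (fun t _ => hLyap (x t))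
  linarith [hPnn (T (x S))]

variable [CompleteSpace H] {y y' : ℝ → H}

theorem IsPIESolution.inner_eq_of_adjoint (hx : IsPIESolution T A x x')
    (hy : IsPIESolution (adjoint T) (adjoint A) y y') {s : ℝ} (hs : 0 ≤ s) :
    ⟪y 0, T (x s)⟫ = ⟪y s, T (x 0)⟫ := by
  have hG : ∀ t ∈ Icc 0 s, HasDerivAt (fun τ => ⟪y (s - τ), T (x τ)⟫) 0 t := by
    intro t ⟨ht, hts⟩
    have hst : 0 ≤ s - t := by linarith
    have hys : HasDerivAt (fun τ => y (s - τ)) (-y' (s - t)) t := by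
      simpa [Function.comp_def] using (hy (s - t) hst).1.scomp t ((hasDerivAt_id t).const_sub s)
    have hTx : HasDerivAt (fun τ => T (x τ)) (T (x' t)) t :=
      T.hasFDerivAt.comp_hasDerivAt t (hx t ht).1
    refine (hys.inner ℝ hTx).congr_deriv ?_
    rw [inner_neg_left, ← adjoint_inner_left T (x t), (hy (s - t) hst).2, adjoint_inner_left,
      ← (hx t ht).2, add_neg_cancel]
  have := constant_of_has_deriv_right_zero
    (fun t ht => (hG t ht).continuousAt.continuousWithinAt)
    (fun t ht => (hG t (Ico_subset_Icc_self ht)).hasDerivWithinAt) s (right_mem_Icc.2 hs)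
  simpa using this

theorem IsPIESolution.inner_output_eq_of_adjoint {U F : Type*} [NormedAddCommGroup U]
    [InnerProductSpace ℝ U] [CompleteSpace U] [NormedAddCommGroup F] [InnerProductSpace ℝ F]
    [CompleteSpace F] (hx : IsPIESolution T A x x') (hy : IsPIESolution (adjoint T) (adjoint A) y y')
    {B : U →L[ℝ] H} {C : H →L[ℝ] F} {u : U} {v : F} (hx0 : T (x 0) = B u)
    (hy0 : adjoint T (y 0) = adjoint C v) {s : ℝ} (hs : 0 ≤ s) :
    ⟪v, C (x s)⟫ = ⟪adjoint B (y s), u⟫ := by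
  rw [← adjoint_inner_left, ← hy0, adjoint_inner_left, hx.inner_eq_of_adjoint hy hs, hx0,
    adjoint_inner_left]

end PIE

theorem inner_adjoint_apply_le_of_block_nonneg {H F : Type*} [NormedAddCommGroup H]
    [InnerProductSpace ℝ H] [CompleteSpace H] [NormedAddCommGroup F] [InnerProductSpace ℝ F]
    [CompleteSpace F] {P : H →L[ℝ] H} {M : H →L[ℝ] F} {W : F →L[ℝ] F}
    (hblock : ∀ x v, 0 ≤ ⟪x, P x⟫ + 2 * ⟪v, M (P x)⟫ + ⟪v, W v⟫) (v : F) :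
    ⟪adjoint M v, P (adjoint M v)⟫ ≤ ⟪v, W v⟫ := by
  have h := hblock (-adjoint M v) v
  rw [map_neg, map_neg, inner_neg_neg, inner_neg_right,
    ← adjoint_inner_left M (P (adjoint M v)) v] at h
  linarith

theorem intervalIntegral_norm_sq_le_of_inner_eq {ι F G : Type*} [Fintype ι]
    [NormedAddCommGroup F] [InnerProductSpace ℝ F] [NormedAddCommGroup G] [InnerProductSpace ℝ G]
    (b : OrthonormalBasis ι ℝ F) {y : ℝ → F} {z : ι → ℝ → G} {u : G} {a c : ℝ} (hac : a ≤ c)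
    (hy : ContinuousOn y (Icc a c)) (hz : ∀ i, ContinuousOn (z i) (Icc a c))
    (hyz : ∀ i, ∀ s ∈ Icc a c, ⟪b i, y s⟫ = ⟪z i s, u⟫) :
    ∫ s in a..c, ‖y s‖ ^ 2 ≤ (∑ i, ∫ s in a..c, ‖z i s‖ ^ 2) * ‖u‖ ^ 2 := by
  have hzc : ∀ i, ContinuousOn (fun s => ‖z i s‖ ^ 2) (Icc a c) := fun i =>
    (continuous_norm.pow 2).comp_continuousOn (hz i)
  rw [← intervalIntegral.integral_finsetSum fun i _ => (hzc i).intervalIntegrable_of_Icc hac,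
    ← intervalIntegral.integral_mul_const]
  refine intervalIntegral.integral_mono_on hac
    (((continuous_norm.pow 2).comp_continuousOn hy).intervalIntegrable_of_Icc hac)
    (((continuousOn_finsetSum _ fun i _ => hzc i).mul continuousOn_const).intervalIntegrable_of_Icc
      hac) fun s hs => ?_
  calc ‖y s‖ ^ 2 = ∑ i, ⟪b i, y s⟫ ^ 2 := (b.sum_sq_inner_right (y s)).symm
    _ ≤ ∑ i, ‖z i s‖ ^ 2 * ‖u‖ ^ 2 := Finset.sum_le_sum fun i _ => by
        rw [hyz i s hs, ← mul_pow]
        exact sq_le_sq.2 ((abs_real_inner_le_norm _ _).trans (le_abs_self _))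
    _ = (∑ i, ‖z i s‖ ^ 2) * ‖u‖ ^ 2 := (Finset.sum_mul ..).symm

theorem setIntegral_Ioi_le_of_intervalIntegral_le {f : ℝ → ℝ} {a C : ℝ}
    (hf : ContinuousOn f (Ici a)) (hnn : 0 ≤ f) (h : ∀ S, a ≤ S → ∫ t in a..S, f t ≤ C) :
    ∫ t in Ioi a, f t ≤ C := by
  have hbound : ∀ S, a ≤ S → ∫ t in a..S, ‖f t‖ ≤ C := fun S hS => by
    simpa only [Real.norm_of_nonneg (hnn _)] using h S hS
  have hfi : IntegrableOn f (Ioi a) :=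
    integrableOn_Ioi_of_intervalIntegral_norm_bounded C a
      (fun S => ((hf.mono Icc_subset_Ici_self).integrableOn_Icc).mono_set Ioc_subset_Icc_self)
      Filter.tendsto_id (Filter.eventually_atTop.2 ⟨a, hbound⟩)
  exact le_of_tendsto (intervalIntegral_tendsto_integral_Ioi a hfi Filter.tendsto_id)
    (Filter.eventually_atTop.2 ⟨a, h⟩)

theorem inner_adjoint_add_comp_apply {H U : Type*} [NormedAddCommGroup H] [InnerProductSpace ℝ H]
    [CompleteSpace H] [NormedAddCommGroup U] [InnerProductSpace ℝ U] [CompleteSpace U]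
    {A P : H →L[ℝ] H} {B : U →L[ℝ] H} {K Z : H →L[ℝ] U} (hK : K ∘L P = Z) (y z : H) :
    ⟪P y, adjoint (A + B ∘L K) z⟫ = ⟪P y, adjoint A z⟫ + ⟪Z y, adjoint B z⟫ := by
  rw [map_add, adjoint_comp, add_apply, inner_add_right, comp_apply, adjoint_inner_right K, ← hK,
    comp_apply]

theorem pie_H2_optimal_controller_general
    {H : Type*} [NormedAddCommGroup H] [InnerProductSpace ℝ H] [CompleteSpace H]
    (nw nu nz : ℕ) (T A : H →L[ℝ] H)
    (B₁ : EuclideanSpace ℝ (Fin nw) →L[ℝ] H)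
    (B₂ : EuclideanSpace ℝ (Fin nu) →L[ℝ] H)
    (C₁ : H →L[ℝ] EuclideanSpace ℝ (Fin nz))
    (D₁₂ : EuclideanSpace ℝ (Fin nu) →L[ℝ] EuclideanSpace ℝ (Fin nz))
    (γ : ℝ)
    (P : H →L[ℝ] H) (hPsa : IsSelfAdjoint P)
    (Z : H →L[ℝ] EuclideanSpace ℝ (Fin nu))
    (W : EuclideanSpace ℝ (Fin nz) →L[ℝ] EuclideanSpace ℝ (Fin nz))
    (hLPI : ∀ x : H,
      2 * ⟪P (ContinuousLinearMap.adjoint T x), ContinuousLinearMap.adjoint A x⟫ +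
        2 * ⟪Z (ContinuousLinearMap.adjoint T x), ContinuousLinearMap.adjoint B₂ x⟫ +
        ‖ContinuousLinearMap.adjoint B₁ x‖ ^ 2 ≤ 0)
    (hblock : ∀ (x : H) (v : EuclideanSpace ℝ (Fin nz)),
      0 ≤ ⟪x, P x⟫ + 2 * ⟪v, C₁ (P x) + D₁₂ (Z x)⟫ + ⟪v, W v⟫)
    (htrace : LinearMap.trace ℝ (EuclideanSpace ℝ (Fin nz)) W.toLinearMap ≤ γ ^ 2)
    (K : H →L[ℝ] EuclideanSpace ℝ (Fin nu)) (hK : K ∘L P = Z)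
    (hdual_exist : ∀ ub₀ : EuclideanSpace ℝ (Fin nz), ∃ xb xb' : ℝ → H,
      (∀ t : ℝ, 0 ≤ t → HasDerivAt xb (xb' t) t) ∧
      (∀ t : ℝ, 0 ≤ t →
        ContinuousLinearMap.adjoint T (xb' t) =
          ContinuousLinearMap.adjoint (A + B₂ ∘L K) (xb t)) ∧
      ContinuousLinearMap.adjoint T (xb 0) =
        ContinuousLinearMap.adjoint (C₁ + D₁₂ ∘L K) ub₀) :
    ∀ (u₀ : EuclideanSpace ℝ (Fin nw)) (x x' : ℝ → H),
      (∀ t : ℝ, 0 ≤ t → HasDerivAt x (x' t) t) →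
      (∀ t : ℝ, 0 ≤ t → T (x' t) = (A + B₂ ∘L K) (x t)) →
      T (x 0) = B₁ u₀ →
      (∫ t in Set.Ioi (0 : ℝ), ‖(C₁ + D₁₂ ∘L K) (x t)‖ ^ 2) ≤ γ ^ 2 * ‖u₀‖ ^ 2 := by
  intro u₀ x x' hx hxode hx0
  have hxsol : IsPIESolution T (A + B₂ ∘L K) x x' := fun t ht => ⟨hx t ht, hxode t ht⟩
  let b := EuclideanSpace.basisFun (Fin nz) ℝ
  choose y y' hy hyode hy0 using fun i => hdual_exist (b i)
  have hysol : ∀ i, IsPIESolution (adjoint T) (adjoint (A + B₂ ∘L K)) (y i) (y' i) :=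
    fun i t ht => ⟨hy i t ht, hyode i t ht⟩
  have hPnn : ∀ z, 0 ≤ ⟪z, P z⟫ := fun z => by simpa using hblock z 0
  have hLyap : ∀ z, 2 * ⟪P (adjoint T z), adjoint (A + B₂ ∘L K) z⟫ + ‖adjoint B₁ z‖ ^ 2 ≤ 0 :=
    fun z => by
      linarith [hLPI z, inner_adjoint_add_comp_apply (A := A) (B := B₂) hK (adjoint T z) z]
  have hW : ∀ i S, 0 ≤ S → ∫ t in 0..S, ‖adjoint B₁ (y i t)‖ ^ 2 ≤ ⟪b i, W (b i)⟫ :=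
    fun i S hS => by
      refine ((hysol i).intervalIntegral_norm_sq_le hPsa.isSymmetric hPnn _ hLyap hS).trans ?_
      rw [hy0 i]
      exact inner_adjoint_apply_le_of_block_nonneg (fun x v => by simpa [← hK] using hblock x v) _
  have hCx : ContinuousOn (fun t => (C₁ + D₁₂ ∘L K) (x t)) (Ici 0) :=
    (C₁ + D₁₂ ∘L K).continuous.comp_continuousOn hxsol.continuousOn
  refine setIntegral_Ioi_le_of_intervalIntegral_le ((continuous_norm.pow 2).comp_continuousOn hCx)
    (fun t => by positivity) fun S hS => ?_
  calc ∫ t in 0..S, ‖(C₁ + D₁₂ ∘L K) (x t)‖ ^ 2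
      ≤ (∑ i, ∫ t in 0..S, ‖adjoint B₁ (y i t)‖ ^ 2) * ‖u₀‖ ^ 2 :=
        intervalIntegral_norm_sq_le_of_inner_eq b hS (hCx.mono Icc_subset_Ici_self)
          (fun i => ((adjoint B₁).continuous.comp_continuousOn (hysol i).continuousOn).mono
            Icc_subset_Ici_self)
          fun i s hs => hxsol.inner_output_eq_of_adjoint (hysol i) hx0 (hy0 i) hs.1
    _ ≤ (∑ i, ⟪b i, W (b i)⟫) * ‖u₀‖ ^ 2 := by gcongr with i; exact hW i S hS
    _ = LinearMap.trace ℝ _ W.toLinearMap * ‖u₀‖ ^ 2 := by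
        rw [LinearMap.trace_eq_sum_inner _ b]; rfl
    _ ≤ γ ^ 2 * ‖u₀‖ ^ 2 := by gcongr

/-- **Corollary 5 (the `H₂`-norm of the closed-loop system under state feedback `u = Kx`).**
If `P ⪰ εI` self-adjoint, `Z`, and `W` self-adjoint satisfy the controller LPI
(i) `A P T* + T P A* + B₂ Z T* + T Z* B₂* + B₁ B₁* ⪯ 0`,
(ii) `[[P, (C₁P + D₁₂Z)*], [C₁P + D₁₂Z, W]] ⪰ 0`, and (iii) `trace(W) ≤ γ²`,
and `K = Z P⁻¹`, and dual closed-loop solutions exist, then the closed-loop system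
`Σ(T, A + B₂K, B₁, C₁ + D₁₂K)` has `H₂`-norm at most `γ`. -/
theorem pie_H2_optimal_controller
    {H : Type*} [NormedAddCommGroup H] [InnerProductSpace ℝ H] [CompleteSpace H]
    (nw nu nz : ℕ) (T A : H →L[ℝ] H)
    (B₁ : EuclideanSpace ℝ (Fin nw) →L[ℝ] H)
    (B₂ : EuclideanSpace ℝ (Fin nu) →L[ℝ] H)
    (C₁ : H →L[ℝ] EuclideanSpace ℝ (Fin nz))
    (D₁₂ : EuclideanSpace ℝ (Fin nu) →L[ℝ] EuclideanSpace ℝ (Fin nz))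
    (ε γ : ℝ) (hε : 0 < ε) (hγ : 0 < γ)
    (P : H →L[ℝ] H) (hPsa : IsSelfAdjoint P)
    (hPpos : ∀ x : H, ε * ‖x‖ ^ 2 ≤ ⟪x, P x⟫)
    (Z : H →L[ℝ] EuclideanSpace ℝ (Fin nu))
    (W : EuclideanSpace ℝ (Fin nz) →L[ℝ] EuclideanSpace ℝ (Fin nz)) (hWsa : IsSelfAdjoint W)
    (hLPI : ∀ x : H,
      2 * ⟪P (ContinuousLinearMap.adjoint T x), ContinuousLinearMap.adjoint A x⟫ +
        2 * ⟪Z (ContinuousLinearMap.adjoint T x), ContinuousLinearMap.adjoint B₂ x⟫ +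
        ‖ContinuousLinearMap.adjoint B₁ x‖ ^ 2 ≤ 0)
    (hblock : ∀ (x : H) (v : EuclideanSpace ℝ (Fin nz)),
      0 ≤ ⟪x, P x⟫ + 2 * ⟪v, C₁ (P x) + D₁₂ (Z x)⟫ + ⟪v, W v⟫)
    (htrace : LinearMap.trace ℝ (EuclideanSpace ℝ (Fin nz)) W.toLinearMap ≤ γ ^ 2)
    (K : H →L[ℝ] EuclideanSpace ℝ (Fin nu)) (hK : K ∘L P = Z)
    (hdual_exist : ∀ ub₀ : EuclideanSpace ℝ (Fin nz), ∃ xb xb' : ℝ → H,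
      (∀ t : ℝ, 0 ≤ t → HasDerivAt xb (xb' t) t) ∧
      (∀ t : ℝ, 0 ≤ t →
        ContinuousLinearMap.adjoint T (xb' t) =
          ContinuousLinearMap.adjoint (A + B₂ ∘L K) (xb t)) ∧
      ContinuousLinearMap.adjoint T (xb 0) =
        ContinuousLinearMap.adjoint (C₁ + D₁₂ ∘L K) ub₀) :
    ∀ (u₀ : EuclideanSpace ℝ (Fin nw)) (x x' : ℝ → H),
      (∀ t : ℝ, 0 ≤ t → HasDerivAt x (x' t) t) →
      (∀ t : ℝ, 0 ≤ t → T (x' t) = (A + B₂ ∘L K) (x t)) →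
      T (x 0) = B₁ u₀ →
      (∫ t in Set.Ioi (0 : ℝ), ‖(C₁ + D₁₂ ∘L K) (x t)‖ ^ 2) ≤ γ ^ 2 * ‖u₀‖ ^ 2 :=
  pie_H2_optimal_controller_general nw nu nz T A B₁ B₂ C₁ D₁₂ γ P hPsa Z W hLPI hblock htrace K hK
    hdual_exist
end
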